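/- arXiv:2210.00190 — 4 statements merged into one kernel-verified Lean document; each statement's English description precedes it below -/
import Mathlib

section
/- Let Φ : ℝ → ℝ² be continuous and bounded, a > 0, and suppose Φ is persistently exciting: there exist T > 0 and δ > 0 such that ∫_t^{t+T} Φ(s)·Φ(s)ᵀ ds ≥ δ·I₂ (in the Loewner order) for all t ≥ 0. Let Q : ℝ → Matrix (Fin 2) (Fin 2) ℝ solve Q'(t) = -a·(Q(t) - Φ(t)·Φ(t)ᵀ) with Q(0) = 0. Then there exists q > 0 such that Q(t) ≥ q·I₂ for all t ≥ T. -/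
open Matrix

attribute [local instance] Matrix.normedAddCommGroup Matrix.normedSpace

/-- Scalar variation-of-constants representation for `f' = -a (f - g)`, `f 0 = 0`. -/
lemma KRE_scalar_rep (a : ℝ) (f g : ℝ → ℝ) (hg : Continuous g) (hf0 : f 0 = 0)
    (hf : ∀ t, HasDerivAt f (-a * (f t - g t)) t) (t : ℝ) :
    Real.exp (a * t) * f t = ∫ s in (0:ℝ)..t, a * Real.exp (a * s) * g s := by
  set G : ℝ → ℝ := fun s => a * Real.exp (a * s) * g s with hGdef
  have hGc : Continuous G := by
    apply Continuous.mul _ hg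
    exact continuous_const.mul ((continuous_const.mul continuous_id).rexp)
  set h : ℝ → ℝ := fun t => Real.exp (a * t) * f t - ∫ s in (0:ℝ)..t, G s with hhdef
  have key : ∀ t, HasDerivAt h 0 t := by
    intro t
    have h1 : HasDerivAt (fun t => Real.exp (a * t)) (a * Real.exp (a * t)) t := by
      simpa [mul_comm] using ((hasDerivAt_id t).const_mul a).exp
    have h2 := h1.mul (hf t)
    have h3 : HasDerivAt (fun u => ∫ s in (0:ℝ)..u, G s) (G t) t :=
      (hGc.integral_hasStrictDerivAt 0 t).hasDerivAt
    have h4 := h2.sub h3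
    refine h4.congr_deriv ?_
    simp only [hGdef]
    ring
  have hconst := is_const_of_deriv_eq_zero (fun t => (key t).differentiableAt)
    (fun t => (key t).deriv) t 0
  have h0 : h 0 = 0 := by simp [hhdef, hf0]
  have : h t = 0 := by rw [hconst, h0]
  simp only [hhdef] at this
  linarith [this]

/-- Evaluation of a matrix entry as a continuous linear map. -/
noncomputable def KRE_entryCLM (i j : Fin 2) : Matrix (Fin 2) (Fin 2) ℝ →L[ℝ] ℝ :=
  LinearMap.toContinuousLinearMap
    { toFun := fun M => M i j
      map_add' := fun _ _ => rfl
      map_smul' := fun _ _ => rfl }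

@[simp] lemma KRE_entryCLM_apply (i j : Fin 2) (M : Matrix (Fin 2) (Fin 2) ℝ) :
    KRE_entryCLM i j M = M i j := rfl

/-- Quadratic form `M ↦ x ⬝ᵥ M x` as a continuous linear map in `M`. -/
noncomputable def KRE_quadCLM (x : Fin 2 → ℝ) : Matrix (Fin 2) (Fin 2) ℝ →L[ℝ] ℝ :=
  LinearMap.toContinuousLinearMap
    { toFun := fun M => x ⬝ᵥ M.mulVec x
      map_add' := fun M N => by simp [Matrix.add_mulVec, dotProduct_add]; ring
      map_smul' := fun c M => by simp [Matrix.smul_mulVec, dotProduct_smul]; ring }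

@[simp] lemma KRE_quadCLM_apply (x : Fin 2 → ℝ) (M : Matrix (Fin 2) (Fin 2) ℝ) :
    KRE_quadCLM x M = x ⬝ᵥ M.mulVec x := rfl

lemma KRE_vecMulVec_quad (u x : Fin 2 → ℝ) :
    x ⬝ᵥ (vecMulVec u u).mulVec x = (u ⬝ᵥ x) ^ 2 := by
  simp [vecMulVec, mulVec, dotProduct, Finset.mul_sum, Fin.sum_univ_two]
  ring

/-- Persistent excitation of `Φ` plus the Kreisselmeier regression extension
`Q' = -a (Q - Φ Φᵀ)`, `Q 0 = 0`, imply a uniform positive-definiteness bound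
`Q(t) ≥ q I₂` for all `t ≥ T`. -/
theorem KRE_uniform_positive_definite
    (Φ : ℝ → EuclideanSpace ℝ (Fin 2)) (hΦcont : Continuous Φ)
    (μ : ℝ) (hΦbdd : ∀ t, ‖Φ t‖ ≤ μ)
    (a : ℝ) (ha : 0 < a)
    (T δ : ℝ) (hT : 0 < T) (hδ : 0 < δ)
    (hPE : ∀ t ≥ (0 : ℝ),
      (((∫ s in t..(t + T), vecMulVec (Φ s) (Φ s)) -
        δ • (1 : Matrix (Fin 2) (Fin 2) ℝ))).PosSemidef)
    (Q : ℝ → Matrix (Fin 2) (Fin 2) ℝ)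
    (hQ0 : Q 0 = 0)
    (hQode : ∀ t, HasDerivAt Q (-a • (Q t - vecMulVec (Φ t) (Φ t))) t) :
    ∃ q > (0 : ℝ), ∀ t ≥ T, ((Q t) - q • (1 : Matrix (Fin 2) (Fin 2) ℝ)).PosSemidef := by
  set G : ℝ → Matrix (Fin 2) (Fin 2) ℝ := fun s => vecMulVec (Φ s) (Φ s) with hGdef
  have hΦi : ∀ i : Fin 2, Continuous fun s => Φ s i := fun i =>
    (continuous_apply i).comp ((PiLp.continuous_ofLp 2 _).comp hΦcont)
  have hGc : Continuous G := continuous_matrix fun i j => (hΦi i).mul (hΦi j)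
  -- derivative of L ∘ Q for a continuous linear functional L
  have hLQ : ∀ (L : Matrix (Fin 2) (Fin 2) ℝ →L[ℝ] ℝ) (t : ℝ),
      HasDerivAt (fun t => L (Q t)) (-a * (L (Q t) - L (G t))) t := by
    intro L t
    have h0 := L.hasFDerivAt.comp_hasDerivAt t (hQode t)
    refine h0.congr_deriv ?_
    show L (-a • (Q t - G t)) = -a * (L (Q t) - L (G t))
    rw [ContinuousLinearMap.map_smul, map_sub, smul_eq_mul]
  have hrep : ∀ (L : Matrix (Fin 2) (Fin 2) ℝ →L[ℝ] ℝ) (t : ℝ),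
      Real.exp (a * t) * L (Q t) = ∫ s in (0:ℝ)..t, a * Real.exp (a * s) * L (G s) := by
    intro L t
    exact KRE_scalar_rep a (fun t => L (Q t)) (fun t => L (G t))
      (L.continuous.comp hGc) (by simp [hQ0]) (hLQ L) t
  -- symmetry of Q t
  have hsymm : ∀ (t : ℝ) (i j : Fin 2), Q t i j = Q t j i := by
    intro t i j
    have hf : ∀ t, HasDerivAt (fun t => Q t i j - Q t j i)
        (-a * ((Q t i j - Q t j i) - 0)) t := by
      intro t
      have h1 := (hLQ (KRE_entryCLM i j) t).sub (hLQ (KRE_entryCLM j i) t)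
      simp only [KRE_entryCLM_apply] at h1
      refine h1.congr_deriv ?_
      have hG : G t i j = G t j i := by simp [hGdef, vecMulVec]; ring
      rw [hG]; ring
    have := KRE_scalar_rep a (fun t => Q t i j - Q t j i) (fun _ => 0)
      continuous_const (by simp [hQ0]) hf t
    simp only [mul_zero, intervalIntegral.integral_zero] at this
    have he := Real.exp_pos (a * t)
    have : Q t i j - Q t j i = 0 := by
      by_contra hne
      exact hne (by nlinarith [this])
    linarith
  refine ⟨δ * a * Real.exp (-(a * T)), by positivity, ?_⟩
  intro t ht
  set q : ℝ := δ * a * Real.exp (-(a * T)) with hqdef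
  rw [Matrix.posSemidef_iff_dotProduct_mulVec]
  constructor
  · -- Hermitian
    ext i j
    simp [Matrix.conjTranspose_apply, Matrix.sub_apply, Matrix.one_apply, hsymm t j i]
    rcases eq_or_ne i j with h | h <;> simp [h, eq_comm]
  · -- quadratic form bound
    intro x
    have hstar : (star x : Fin 2 → ℝ) = x := by simp
    rw [hstar]
    set g : ℝ → ℝ := fun s => x ⬝ᵥ (G s).mulVec x with hgdef
    have hgc : Continuous g := (KRE_quadCLM x).continuous.comp hGc
    have hgnn : ∀ s, 0 ≤ g s := by
      intro s
      rw [hgdef]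
      simp only [hGdef]
      rw [KRE_vecMulVec_quad]
      positivity
    have hform := hrep (KRE_quadCLM x) t
    simp only [KRE_quadCLM_apply] at hform
    -- PE bound on the window [t-T, t]
    have htT : (0:ℝ) ≤ t - T := by linarith
    have hPEt := hPE (t - T) htT
    have hwin : t - T + T = t := by ring
    rw [hwin] at hPEt
    have hPEx := hPEt.dotProduct_mulVec_nonneg x
    rw [hstar] at hPEx
    have hGint :=
      hGc.intervalIntegrable (μ := MeasureTheory.volume) (t - T) t
    have hcomm : (∫ s in (t-T)..t, g s) = x ⬝ᵥ (∫ s in (t-T)..t, G s).mulVec x :=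
      (KRE_quadCLM x).intervalIntegral_comp_comm hGint
    have hexp : x ⬝ᵥ ((∫ s in (t-T)..t, G s) -
        δ • (1 : Matrix (Fin 2) (Fin 2) ℝ)).mulVec x
        = (∫ s in (t-T)..t, g s) - δ * (x ⬝ᵥ x) := by
      rw [Matrix.sub_mulVec, dotProduct_sub, Matrix.smul_mulVec,
        Matrix.one_mulVec, dotProduct_smul, smul_eq_mul, ← hcomm]
    rw [hexp] at hPEx
    have hPE' : δ * (x ⬝ᵥ x) ≤ ∫ s in (t-T)..t, g s := by linarith
    -- split the integral
    have hI1 : IntervalIntegrable (fun s => a * Real.exp (a * s) * g s)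
        MeasureTheory.volume 0 (t - T) := by
      apply Continuous.intervalIntegrable
      exact (continuous_const.mul ((continuous_const.mul continuous_id).rexp)).mul hgc
    have hI2 : IntervalIntegrable (fun s => a * Real.exp (a * s) * g s)
        MeasureTheory.volume (t - T) t := by
      apply Continuous.intervalIntegrable
      exact (continuous_const.mul ((continuous_const.mul continuous_id).rexp)).mul hgc
    have hsplit := intervalIntegral.integral_add_adjacent_intervals hI1 hI2
    have h1nn : 0 ≤ ∫ s in (0:ℝ)..(t-T), a * Real.exp (a * s) * g s := by
      apply intervalIntegral.integral_nonneg htT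
      intro s _
      have := hgnn s
      have := (Real.exp_pos (a * s)).le
      positivity
    have h2lb : a * Real.exp (a * (t - T)) * ∫ s in (t-T)..t, g s ≤
        ∫ s in (t-T)..t, a * Real.exp (a * s) * g s := by
      rw [← intervalIntegral.integral_const_mul]
      apply intervalIntegral.integral_mono_on (by linarith)
        ((continuous_const.mul hgc).intervalIntegrable _ _) hI2
      intro s hs
      have hle : Real.exp (a * (t - T)) ≤ Real.exp (a * s) :=
        Real.exp_le_exp.mpr (mul_le_mul_of_nonneg_left hs.1 ha.le)
      have h := mul_le_mul_of_nonneg_right hle (hgnn s)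
      simpa [mul_assoc] using mul_le_mul_of_nonneg_left h ha.le
    -- combine
    have hqx : Real.exp (a * t) * (q * (x ⬝ᵥ x)) ≤ Real.exp (a * t) * (x ⬝ᵥ (Q t).mulVec x) := by
      rw [hform, ← hsplit]
      have hE : Real.exp (a * t) * Real.exp (-(a * T)) = Real.exp (a * (t - T)) := by
        rw [← Real.exp_add]; ring_nf
      have hxx : 0 ≤ x ⬝ᵥ x := by
        simp [dotProduct, Fin.sum_univ_two]; nlinarith [sq_nonneg (x 0), sq_nonneg (x 1)]
      calc Real.exp (a * t) * (q * (x ⬝ᵥ x))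
          = a * Real.exp (a * (t - T)) * (δ * (x ⬝ᵥ x)) := by
            rw [hqdef, ← hE]; ring
        _ ≤ a * Real.exp (a * (t - T)) * ∫ s in (t-T)..t, g s :=
            mul_le_mul_of_nonneg_left hPE' (by positivity)
        _ ≤ (∫ s in (0:ℝ)..(t-T), a * Real.exp (a * s) * g s) +
            ∫ s in (t-T)..t, a * Real.exp (a * s) * g s := by linarith
    have hqle : q * (x ⬝ᵥ x) ≤ x ⬝ᵥ (Q t).mulVec x :=
      le_of_mul_le_mul_left hqx (Real.exp_pos _)
    have : x ⬝ᵥ (Q t - q • (1 : Matrix (Fin 2) (Fin 2) ℝ)).mulVec x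
        = x ⬝ᵥ (Q t).mulVec x - q * (x ⬝ᵥ x) := by
      rw [Matrix.sub_mulVec, dotProduct_sub, Matrix.smul_mulVec,
        Matrix.one_mulVec, dotProduct_smul, smul_eq_mul]
    rw [this]
    linarith
end

section
/- Let Q : ℝ → Matrix (Fin 2) (Fin 2) ℝ solve Q'(t) = -a·(Q(t) - Φ(t)·Φ(t)ᵀ) with Q(0) = 0, where a > 0 and ‖Φ(t)‖ ≤ μ for all t ≥ 0. Then Q(t) is symmetric positive semidefinite and ‖Q(t)‖ ≤ μ² for all t ≥ 0. -/
open Matrix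

attribute [local instance] Matrix.normedAddCommGroup Matrix.normedSpace

lemma KRE_aux_sol {a : ℝ} (f g : ℝ → ℝ) (hg : Continuous g)
    (hf : ∀ t, HasDerivAt f (-a * f t + a * g t) t) (t : ℝ) :
    Real.exp (a*t) * f t - f 0 = ∫ s in (0:ℝ)..t, a * Real.exp (a*s) * g s := by
  have key : ∀ s : ℝ, HasDerivAt (fun u => Real.exp (a*u) * f u) (a * Real.exp (a*s) * g s) s := by
    intro s
    have h1 : HasDerivAt (fun u : ℝ => Real.exp (a*u)) (a * Real.exp (a*s)) s := by
      have := ((hasDerivAt_id s).const_mul a).exp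
      simpa [mul_comm] using this
    have h2 := h1.mul (hf s)
    refine h2.congr_deriv ?_
    ring
  have hcont : Continuous fun s => a * Real.exp (a*s) * g s :=
    (continuous_const.mul (Real.continuous_exp.comp (continuous_const.mul continuous_id))).mul hg
  have := intervalIntegral.integral_eq_sub_of_hasDerivAt (fun s _ => key s)
    (hcont.intervalIntegrable 0 t)
  simpa using this.symm

lemma KRE_aux_exp {a : ℝ} (t : ℝ) :
    ∫ s in (0:ℝ)..t, a * Real.exp (a*s) = Real.exp (a*t) - 1 := by
  have key : ∀ s ∈ Set.uIcc (0:ℝ) t, HasDerivAt (fun u : ℝ => Real.exp (a*u)) (a * Real.exp (a*s)) s := by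
    intro s _
    have := ((hasDerivAt_id s).const_mul a).exp
    simpa [mul_comm] using this
  have hcont : Continuous fun s : ℝ => a * Real.exp (a*s) :=
    continuous_const.mul (Real.continuous_exp.comp (continuous_const.mul continuous_id))
  have := intervalIntegral.integral_eq_sub_of_hasDerivAt key (hcont.intervalIntegrable 0 t)
  set_option linter.unnecessarySimpa false in
  simpa using this

lemma KRE_aux_comp_le (x : EuclideanSpace ℝ (Fin 2)) (i : Fin 2) : |x i| ≤ ‖x‖ := by
  rw [EuclideanSpace.norm_eq]
  calc |x i| = Real.sqrt (‖x i‖^2) := by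
        rw [Real.sqrt_sq_eq_abs, Real.norm_eq_abs, abs_abs]
    _ ≤ _ := by
        apply Real.sqrt_le_sqrt
        exact Finset.single_le_sum (f := fun j => ‖x j‖^2) (fun j _ => sq_nonneg _) (Finset.mem_univ i)

/-- The KRE matrix `Q` with `Q' = -a (Q - Φ Φᵀ)`, `Q 0 = 0`, and `‖Φ(t)‖ ≤ μ`
is symmetric positive semidefinite with `‖Q(t)‖ ≤ μ²` for all `t ≥ 0`. -/
theorem KRE_psd_and_bounded
    (Φ : ℝ → EuclideanSpace ℝ (Fin 2)) (hΦcont : Continuous Φ)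
    (a μ : ℝ) (ha : 0 < a) (hΦbdd : ∀ t ≥ (0 : ℝ), ‖Φ t‖ ≤ μ)
    (Q : ℝ → Matrix (Fin 2) (Fin 2) ℝ)
    (hQ0 : Q 0 = 0)
    (hQode : ∀ t, HasDerivAt Q (-a • (Q t - vecMulVec (Φ t) (Φ t))) t) :
    ∀ t ≥ (0 : ℝ), (Q t).PosSemidef ∧ ‖Q t‖ ≤ μ ^ 2 := by
  have hμ0 : 0 ≤ μ := le_trans (norm_nonneg _) (hΦbdd 0 le_rfl)
  have hΦi : ∀ i : Fin 2, Continuous fun t => Φ t i := fun i => by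
    exact (EuclideanSpace.proj (𝕜 := ℝ) i).continuous.comp hΦcont
  have hΦib : ∀ t ≥ (0:ℝ), ∀ i, |Φ t i| ≤ μ := fun t ht i =>
    (KRE_aux_comp_le (Φ t) i).trans (hΦbdd t ht)
  have hEntry : ∀ (i j : Fin 2) (t : ℝ),
      HasDerivAt (fun u => Q u i j) (-a * Q t i j + a * (Φ t i * Φ t j)) t := by
    intro i j t
    have h1 := hasDerivAt_pi.mp (hQode t) i
    have h2 := hasDerivAt_pi.mp h1 j
    refine h2.congr_deriv ?_
    simp [vecMulVec_apply]
    ring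
  intro t ht
  -- entry formula
  have hform : ∀ i j : Fin 2, Real.exp (a*t) * Q t i j =
      ∫ s in (0:ℝ)..t, a * Real.exp (a*s) * (Φ s i * Φ s j) := by
    intro i j
    have := KRE_aux_sol (fun u => Q u i j) (fun u => Φ u i * Φ u j)
      ((hΦi i).mul (hΦi j)) (hEntry i j) t
    simpa [hQ0] using this
  -- entry bound
  have hentbd : ∀ i j : Fin 2, |Q t i j| ≤ μ^2 := by
    intro i j
    have hInt : Continuous fun s => a * Real.exp (a*s) * (Φ s i * Φ s j) :=
      (continuous_const.mul (Real.continuous_exp.comp (continuous_const.mul continuous_id))).mul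
        ((hΦi i).mul (hΦi j))
    have h1 : |∫ s in (0:ℝ)..t, a * Real.exp (a*s) * (Φ s i * Φ s j)| ≤
        ∫ s in (0:ℝ)..t, |a * Real.exp (a*s) * (Φ s i * Φ s j)| :=
      intervalIntegral.abs_integral_le_integral_abs ht
    have h2 : (∫ s in (0:ℝ)..t, |a * Real.exp (a*s) * (Φ s i * Φ s j)|) ≤
        ∫ s in (0:ℝ)..t, a * Real.exp (a*s) * μ^2 := by
      apply intervalIntegral.integral_mono_on ht
        (hInt.abs.intervalIntegrable 0 t)
        ((continuous_const.mul (Real.continuous_exp.comp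
          (continuous_const.mul continuous_id))).mul continuous_const |>.intervalIntegrable 0 t)
      intro s hs
      have hae : (0:ℝ) ≤ a * Real.exp (a*s) := by positivity
      rw [abs_mul, abs_of_nonneg hae]
      apply mul_le_mul_of_nonneg_left _ hae
      rw [abs_mul, pow_two]
      exact mul_le_mul (hΦib s hs.1 i) (hΦib s hs.1 j) (abs_nonneg _) hμ0
    have h3 : (∫ s in (0:ℝ)..t, a * Real.exp (a*s) * μ^2) = (Real.exp (a*t) - 1) * μ^2 := by
      rw [intervalIntegral.integral_mul_const, KRE_aux_exp]
    have h4 : Real.exp (a*t) * |Q t i j| ≤ (Real.exp (a*t) - 1) * μ^2 := by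
      rw [← abs_of_nonneg (Real.exp_nonneg (a*t)), ← abs_mul, hform i j,
        abs_of_nonneg (Real.exp_nonneg (a*t))]
      exact h1.trans (h2.trans_eq h3)
    have hep := Real.exp_pos (a*t)
    nlinarith [abs_nonneg (Q t i j), sq_nonneg μ]
  -- symmetry
  have hsym : ∀ i j : Fin 2, Q t i j = Q t j i := by
    intro i j
    have hep := Real.exp_pos (a*t)
    have : Real.exp (a*t) * Q t i j = Real.exp (a*t) * Q t j i := by
      rw [hform i j, hform j i]
      congr 1
      ext s
      ring
    exact mul_left_cancel₀ (ne_of_gt hep) this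
  refine ⟨⟨Matrix.ext fun i j => by simp [conjTranspose_apply, hsym j i], ?_⟩, ?_⟩
  · -- quadratic form nonneg
    intro x
    set f : ℝ → ℝ := fun u => ∑ i : Fin 2, ∑ j : Fin 2, x i * x j * Q u i j with hf
    set g : ℝ → ℝ := fun u => (∑ i : Fin 2, x i * Φ u i)^2 with hgdef
    have hgc : Continuous g :=
      (continuous_finset_sum _ fun i _ => continuous_const.mul (hΦi i)).pow 2
    have hfd : ∀ u, HasDerivAt f (-a * f u + a * g u) u := by
      intro u
      have := HasDerivAt.fun_sum (fun i (_ : i ∈ Finset.univ) =>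
        HasDerivAt.fun_sum (fun j (_ : j ∈ Finset.univ) =>
          ((hEntry i j u).const_mul (x i * x j))))
      refine this.congr_deriv ?_
      simp only [hf, hgdef, Fin.sum_univ_two]
      ring
    have hsol := KRE_aux_sol f g hgc hfd t
    have hf0 : f 0 = 0 := by simp [hf, hQ0]
    have hint : (0:ℝ) ≤ ∫ s in (0:ℝ)..t, a * Real.exp (a*s) * g s := by
      apply intervalIntegral.integral_nonneg ht
      intro s _
      have : (0:ℝ) ≤ g s := sq_nonneg _
      positivity
    have hft : 0 ≤ f t := by
      have hep := Real.exp_pos (a*t)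
      nlinarith [hsol, hint]
    have : (x.sum fun i xi => x.sum fun j xj => star xi * Q t i j * xj) = f t := by
      simp [Finsupp.sum_fintype, hf, Fin.sum_univ_two]
      ring
    rw [this]
    exact hft
  · rw [Matrix.norm_le_iff (by positivity)]
    intro i j
    simpa [Real.norm_eq_abs] using hentbd i j
end

section
/- Let θ ∈ ℝ, λ, i ∈ ℝ², ψ > 0, and suppose i = L(θ)⁻¹·(λ - ψ·c(θ)) where L(θ) = Ls·I₂ + (L₀/2)·Q(θ) with Ls = (L_d + L_q)/2, L₀ = L_d - L_q, L_d, L_q > 0, c(θ) = (cos θ, sin θ), and Q(θ) the matrix with rows (cos 2θ, sin 2θ) and (sin 2θ, -cos 2θ). Define the active flux x := λ - L_q·i. Then x = (ψ + L₀·(i·c(θ)))·c(θ); in particular x is parallel to c(θ). -/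
open Matrix

/-- Rotor direction vector `c(θ) = (cos θ, sin θ)`. -/
noncomputable def rotorDir (θ : ℝ) : Fin 2 → ℝ := ![Real.cos θ, Real.sin θ]

/-- Reflection-type matrix `Q(θ)` of the IPMSM inductance. -/
noncomputable def reflMat (θ : ℝ) : Matrix (Fin 2) (Fin 2) ℝ :=
  !![Real.cos (2 * θ), Real.sin (2 * θ); Real.sin (2 * θ), -Real.cos (2 * θ)]

/-- IPMSM inductance matrix `L(θ) = Ls I₂ + (L₀/2) Q(θ)`. -/
noncomputable def inductanceMat (Ls L₀ θ : ℝ) : Matrix (Fin 2) (Fin 2) ℝ :=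
  Ls • (1 : Matrix (Fin 2) (Fin 2) ℝ) + (L₀ / 2) • reflMat θ

/-- The active flux `x = λ - L_q i` of the IPMSM is aligned with the rotor
direction: `x = (ψ + L₀ (i·c(θ))) c(θ)`. -/
theorem active_flux_aligned
    (Ld Lq ψ θ : ℝ) (hLd : 0 < Ld) (hLq : 0 < Lq) (hψ : 0 < ψ)
    (lam i : Fin 2 → ℝ)
    (hi : i = (inductanceMat ((Ld + Lq) / 2) (Ld - Lq) θ)⁻¹ *ᵥ
      (lam - ψ • rotorDir θ)) :
    lam - Lq • i = (ψ + (Ld - Lq) * (i ⬝ᵥ rotorDir θ)) • rotorDir θ := by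
  set L := inductanceMat ((Ld + Lq) / 2) (Ld - Lq) θ with hL
  have hs : Real.sin (2*θ)^2 + Real.cos (2*θ)^2 = 1 := Real.sin_sq_add_cos_sq _
  have hdet : L.det = Ld * Lq := by
    simp [hL, inductanceMat, reflMat, Matrix.det_fin_two, Matrix.one_fin_two]
    linear_combination (-((Ld - Lq)/2)^2) * hs
  have hunit : IsUnit L.det := by
    rw [hdet]; exact (mul_pos hLd hLq).ne'.isUnit
  have hlam : lam = L *ᵥ i + ψ • rotorDir θ := by
    have : L *ᵥ i = lam - ψ • rotorDir θ := by
      rw [hi, Matrix.mulVec_mulVec, Matrix.mul_nonsing_inv _ hunit, Matrix.one_mulVec]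
    rw [this]; abel
  rw [hlam]
  have hc2 : Real.cos (2*θ) = 2 * Real.cos θ ^2 - 1 := Real.cos_two_mul θ
  have hpy : Real.sin θ ^2 + Real.cos θ ^2 = 1 := Real.sin_sq_add_cos_sq θ
  have hs2 : Real.sin (2*θ) = 2 * Real.sin θ * Real.cos θ := Real.sin_two_mul θ
  funext x
  fin_cases x
  · simp [hL, inductanceMat, reflMat, rotorDir, Matrix.mulVec, Matrix.one_fin_two,
      Fin.sum_univ_two, dotProduct]
    linear_combination ((Ld - Lq)/2 * i 0) * hc2 + ((Ld - Lq)/2 * i 1) * hs2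
  · simp [hL, inductanceMat, reflMat, rotorDir, Matrix.mulVec, Matrix.one_fin_two,
      Fin.sum_univ_two, dotProduct]
    linear_combination ((Ld - Lq)/2 * i 0) * hs2 + (-(Ld - Lq)/2 * i 1) * hc2
      - ((Ld - Lq) * i 1) * hpy
end

section
/- Let P := diag(1/γ, 1/γ, 1/(a·q), 1/(a·q), μ²/(q·α)) with γ, a, q, α, μ > 0, and let A(t) be the block matrix with blocks: A₁₁ = -γ·Q(t) (2×2, with Q(t) ≥ q·I₂ symmetric), A₁₂ = -γ·I₂, A₂₂ = -a·I₂, A₂₃ = a·Φ(t) (2×1 with ‖Φ(t)‖ ≤ μ), A₃₃ = -α, all other blocks zero. Then for every v = (x̃, ξ, z) ∈ ℝ² × ℝ² × ℝ: vᵀ·P·A(t)·v = -x̃ᵀQ(t)x̃ - x̃ᵀξ - (1/q)(‖ξ‖² - ξᵀΦ(t)·z + μ²·z²) ≤ -β·‖v‖² where β := min{q/4, 1/(6q), μ²/(2q)}. -/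
open Matrix

set_option maxHeartbeats 1000000

/-- Central computation of Proposition 1: with the diagonal Lyapunov weight
`P = diag(1/γ, 1/γ, 1/(aq), 1/(aq), μ²/(qα))` and the nominal closed-loop
matrix `A` (with `Q ≥ q I₂` symmetric and `‖Φ‖ ≤ μ`), for every
`v = (x̃, ξ, z)` we have
`vᵀ P A v = -x̃ᵀQx̃ - x̃ᵀξ - (1/q)(‖ξ‖² - ξᵀΦ z + μ² z²) ≤ -β ‖v‖²`
where `β = min {q/4, 1/(6q), μ²/(2q)}`. -/
theorem lyapunov_nominal_matrix_bound
    (γ a q α μ : ℝ) (hγ : 0 < γ) (ha : 0 < a) (hq : 0 < q) (hα : 0 < α)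
    (hμ : 0 < μ)
    (Q : Matrix (Fin 2) (Fin 2) ℝ) (hQsym : Q.IsSymm)
    (hQq : (Q - q • (1 : Matrix (Fin 2) (Fin 2) ℝ)).PosSemidef)
    (Φ : Fin 2 → ℝ) (hΦ : Φ 0 ^ 2 + Φ 1 ^ 2 ≤ μ ^ 2)
    (xt ξ : Fin 2 → ℝ) (z : ℝ) :
    letI P : Matrix (Fin 5) (Fin 5) ℝ :=
      Matrix.diagonal ![1 / γ, 1 / γ, 1 / (a * q), 1 / (a * q), μ ^ 2 / (q * α)]
    letI A : Matrix (Fin 5) (Fin 5) ℝ :=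
      !![-γ * Q 0 0, -γ * Q 0 1, -γ, 0, 0;
         -γ * Q 1 0, -γ * Q 1 1, 0, -γ, 0;
         0, 0, -a, 0, a * Φ 0;
         0, 0, 0, -a, a * Φ 1;
         0, 0, 0, 0, -α]
    letI v : Fin 5 → ℝ := ![xt 0, xt 1, ξ 0, ξ 1, z]
    (v ⬝ᵥ ((P * A) *ᵥ v) =
      -(xt ⬝ᵥ (Q *ᵥ xt)) - xt ⬝ᵥ ξ -
        (1 / q) * ((ξ 0 ^ 2 + ξ 1 ^ 2) - (ξ ⬝ᵥ Φ) * z + μ ^ 2 * z ^ 2)) ∧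
    (v ⬝ᵥ ((P * A) *ᵥ v) ≤
      -(min (min (q / 4) (1 / (6 * q))) (μ ^ 2 / (2 * q))) *
        (xt 0 ^ 2 + xt 1 ^ 2 + ξ 0 ^ 2 + ξ 1 ^ 2 + z ^ 2)) := by
  have h10 : Q 1 0 = Q 0 1 := by
    have := congrFun (congrFun hQsym.eq 1) 0
    simpa [Matrix.transpose_apply] using this.symm
  have h1 : (![xt 0, xt 1, ξ 0, ξ 1, z] : Fin 5 → ℝ) ⬝ᵥ
      ((Matrix.diagonal ![1 / γ, 1 / γ, 1 / (a * q), 1 / (a * q), μ ^ 2 / (q * α)] *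
        !![-γ * Q 0 0, -γ * Q 0 1, -γ, 0, 0;
           -γ * Q 1 0, -γ * Q 1 1, 0, -γ, 0;
           0, 0, -a, 0, a * Φ 0;
           0, 0, 0, -a, a * Φ 1;
           0, 0, 0, 0, -α]) *ᵥ ![xt 0, xt 1, ξ 0, ξ 1, z]) =
      -(xt ⬝ᵥ (Q *ᵥ xt)) - xt ⬝ᵥ ξ -
        (1 / q) * ((ξ 0 ^ 2 + ξ 1 ^ 2) - (ξ ⬝ᵥ Φ) * z + μ ^ 2 * z ^ 2) := by
    simp only [Matrix.diagonal_mul, Matrix.mulVec, dotProduct,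
      Fin.sum_univ_five, Fin.sum_univ_two, Matrix.of_apply,
      Matrix.cons_val_zero, Matrix.cons_val_one, Matrix.head_cons,
      Matrix.cons_val_two, Matrix.tail_cons, Matrix.cons_val_three,
      Matrix.cons_val_four, Matrix.head_fin_const]
    rw [h10]
    field_simp
    ring
  refine ⟨h1, ?_⟩
  show _ ≤ _
  rw [h1]
  simp only [dotProduct, Matrix.mulVec, Fin.sum_univ_two]
  rw [h10]
  have hQ0 : q * (xt 0 ^ 2 + xt 1 ^ 2) ≤
      Q 0 0 * xt 0 ^ 2 + (Q 0 1 + Q 0 1) * (xt 0 * xt 1) + Q 1 1 * xt 1 ^ 2 := by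
    have h2 := hQq.dotProduct_mulVec_nonneg xt
    simp only [dotProduct, Matrix.mulVec, Matrix.sub_apply,
      Matrix.smul_apply, Matrix.one_apply, Fin.sum_univ_two] at h2
    norm_num [h10] at h2
    nlinarith [h2]
  set x0 := xt 0; set x1 := xt 1; set y0 := ξ 0; set y1 := ξ 1
  set f0 := Φ 0; set f1 := Φ 1
  have hQ : q * (x0 ^ 2 + x1 ^ 2) ≤
      Q 0 0 * x0 ^ 2 + (Q 0 1 + Q 0 1) * (x0 * x1) + Q 1 1 * x1 ^ 2 := hQ0
  have hC : (y0 * f0 + y1 * f1) ^ 2 ≤ (y0 ^ 2 + y1 ^ 2) * μ ^ 2 := by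
    nlinarith [sq_nonneg (y0 * f1 - y1 * f0), sq_nonneg y0, sq_nonneg y1, hΦ]
  have htz : 2 * ((y0 * f0 + y1 * f1) * z) ≤ (y0 ^ 2 + y1 ^ 2) + μ ^ 2 * z ^ 2 := by
    nlinarith [hC, sq_nonneg (y0 * f0 + y1 * f1 - μ ^ 2 * z), mul_pos hμ hμ]
  set b := min (min (q / 4) (1 / (6 * q))) (μ ^ 2 / (2 * q)) with hb
  have hb1 : b ≤ q / 4 := le_trans (min_le_left _ _) (min_le_left _ _)
  have hb2 : b ≤ 1 / (6 * q) := le_trans (min_le_left _ _) (min_le_right _ _)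
  have hb3 : b ≤ μ ^ 2 / (2 * q) := min_le_right _ _
  have step : -(q / 4) * (x0 ^ 2 + x1 ^ 2) - (1 / (6 * q)) * (y0 ^ 2 + y1 ^ 2)
        - (μ ^ 2 / (2 * q)) * z ^ 2 ≤
      -b * (x0 ^ 2 + x1 ^ 2 + y0 ^ 2 + y1 ^ 2 + z ^ 2) := by
    nlinarith [mul_le_mul_of_nonneg_right hb1 (sq_nonneg x0),
      mul_le_mul_of_nonneg_right hb1 (sq_nonneg x1),
      mul_le_mul_of_nonneg_right hb2 (sq_nonneg y0),
      mul_le_mul_of_nonneg_right hb2 (sq_nonneg y1),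
      mul_le_mul_of_nonneg_right hb3 (sq_nonneg z)]
  refine le_trans ?_ step
  rw [← sub_nonneg]
  set D := -(q / 4) * (x0 ^ 2 + x1 ^ 2) - (1 / (6 * q)) * (y0 ^ 2 + y1 ^ 2)
        - (μ ^ 2 / (2 * q)) * z ^ 2 -
      (-(x0 * (Q 0 0 * x0 + Q 0 1 * x1) + x1 * (Q 0 1 * x0 + Q 1 1 * x1)) -
        (x0 * y0 + x1 * y1) -
        (1 / q) * ((y0 ^ 2 + y1 ^ 2) - (y0 * f0 + y1 * f1) * z + μ ^ 2 * z ^ 2)) with hD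
  have hDE : 12 * q * D =
      12 * q * (Q 0 0 * x0 ^ 2 + (Q 0 1 + Q 0 1) * (x0 * x1) + Q 1 1 * x1 ^ 2)
        - 3 * q ^ 2 * (x0 ^ 2 + x1 ^ 2) + 12 * q * (x0 * y0 + x1 * y1)
        + 10 * (y0 ^ 2 + y1 ^ 2) - 12 * ((y0 * f0 + y1 * f1) * z)
        + 6 * (μ ^ 2 * z ^ 2) := by
    rw [hD]; field_simp; ring
  have hE : 0 ≤ 12 * q * D := by
    rw [hDE]
    nlinarith [mul_le_mul_of_nonneg_left hQ (by positivity : (0:ℝ) ≤ 12 * q),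
      sq_nonneg (3 * q * x0 + 2 * y0), sq_nonneg (3 * q * x1 + 2 * y1), htz]
  nlinarith [hE, hq]
end
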